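/- arXiv:1408.3225 — 7 statements merged into one kernel-verified Lean document; each statement's English description precedes it below -/
import Mathlib

section
/- For coprime positive integers a and b with b odd, the sign of the permutation of Z/bZ given by x ↦ ax equals the Jacobi symbol (a/b). -/
open Equiv Equiv.Perm Finset

namespace Zolo

def mulp {b : ℕ} (u : (ZMod b)ˣ) : Equiv.Perm (ZMod b) where
  toFun x := (u : ZMod b) * x
  invFun x := ((u⁻¹ : (ZMod b)ˣ) : ZMod b) * x
  left_inv x := by simp [← mul_assoc, ← Units.val_mul]
  right_inv x := by simp [← mul_assoc, ← Units.val_mul]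

@[simp] lemma mulp_apply {b : ℕ} (u : (ZMod b)ˣ) (x : ZMod b) :
    mulp u x = (u : ZMod b) * x := rfl

lemma units_odd_pow (u : ℤˣ) {k : ℕ} (hk : Odd k) : u ^ k = u := by
  obtain ⟨j, rfl⟩ := hk
  rw [pow_add, pow_mul, sq, Int.units_mul_self, one_pow, one_mul, pow_one]

lemma sign_addLeft_odd {n : ℕ} [NeZero n] [Fintype (ZMod n)] [DecidableEq (ZMod n)]
    (hn : Odd n) (c : ZMod n) :
    Equiv.Perm.sign (Equiv.addLeft c) = 1 := by
  have hpow : ∀ k : ℕ, (Equiv.addLeft c) ^ k = Equiv.addLeft (k • c) := by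
    intro k
    induction k with
    | zero => ext x; simp
    | succ k ih =>
      ext x
      rw [pow_succ, Equiv.Perm.mul_apply, ih]
      simp only [Equiv.coe_addLeft, succ_nsmul, nsmul_eq_mul]
      ring
  have h1 : (Equiv.addLeft c) ^ n = 1 := by
    rw [hpow n]
    have : (n : ℕ) • c = 0 := by
      rw [nsmul_eq_mul, ZMod.natCast_self, zero_mul]
    rw [this]
    ext x; simp
  have h2 : (Equiv.Perm.sign (Equiv.addLeft c)) ^ n = 1 := by
    rw [← map_pow, h1, map_one]
  calc Equiv.Perm.sign (Equiv.addLeft c) = Equiv.Perm.sign (Equiv.addLeft c) ^ n :=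
        (units_odd_pow _ hn).symm
    _ = 1 := h2


lemma step (m n : ℕ) [NeZero m] [NeZero n] [NeZero (m * n)] (hm : Odd m) (hn : Odd n)
    (a : ℕ) (um : (ZMod m)ˣ) (un : (ZMod n)ˣ) (u : (ZMod (m * n))ˣ)
    (hum : (um : ZMod m) = (a : ZMod m)) (hun : (un : ZMod n) = (a : ZMod n))
    (hu : (u : ZMod (m * n)) = (a : ZMod (m * n))) :
    Equiv.Perm.sign (mulp u) = Equiv.Perm.sign (mulp um) * Equiv.Perm.sign (mulp un) := by
  have hm0 : m ≠ 0 := NeZero.ne m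
  have hn0 : n ≠ 0 := NeZero.ne n
  set f : ZMod m × ZMod n → ZMod (m * n) :=
    fun p => ((p.1.val + m * p.2.val : ℕ) : ZMod (m * n)) with hf
  have hlt : ∀ p : ZMod m × ZMod n, p.1.val + m * p.2.val < m * n := by
    intro p
    have h1 : p.1.val < m := ZMod.val_lt _
    have h2 : p.2.val < n := ZMod.val_lt _
    calc p.1.val + m * p.2.val < m + m * p.2.val := by omega
      _ = m * (p.2.val + 1) := by ring
      _ ≤ m * n := Nat.mul_le_mul_left m (by omega)
  have hinj : Function.Injective f := by
    intro p q hpq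
    have hv := congrArg ZMod.val hpq
    rw [hf] at hv
    simp only at hv
    rw [ZMod.val_cast_of_lt (hlt p), ZMod.val_cast_of_lt (hlt q)] at hv
    have h1 : p.1.val = q.1.val := by
      have hmod := congrArg (· % m) hv
      simpa [Nat.add_mul_mod_self_left, Nat.mod_eq_of_lt (ZMod.val_lt _)] using hmod
    have h2 : p.2.val = q.2.val := by
      have : m * p.2.val = m * q.2.val := by omega
      exact Nat.eq_of_mul_eq_mul_left (Nat.pos_of_ne_zero hm0) this
    exact Prod.ext (ZMod.val_injective m h1) (ZMod.val_injective n h2)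
  have hcard : Fintype.card (ZMod m × ZMod n) = Fintype.card (ZMod (m * n)) := by
    simp [ZMod.card]
  set e : ZMod m × ZMod n ≃ ZMod (m * n) :=
    Equiv.ofBijective f ((Fintype.bijective_iff_injective_and_card f).mpr ⟨hinj, hcard⟩) with he
  set c : ZMod m → ZMod n := fun x => ((a * x.val / m : ℕ) : ZMod n) with hc
  set τ : ZMod m → Equiv.Perm (ZMod n) := fun x => (mulp un).trans (Equiv.addLeft (c x)) with hτ
  set g : Equiv.Perm (ZMod m × ZMod n) :=
    (Equiv.prodCongr (mulp um) (Equiv.refl (ZMod n))) * (Equiv.prodCongrRight τ) with hg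
  -- pointwise commuting square
  have hcomm : ∀ p, e (g p) = (mulp u) (e p) := by
    rintro ⟨x, y⟩
    have hgp : g (x, y) = ((um : ZMod m) * x, (un : ZMod n) * y + c x) := by
      simp [hg, hτ, Equiv.Perm.mul_apply, Equiv.prodCongrRight_apply, Equiv.prodCongr_apply]
      ring
    have hval1 : ((um : ZMod m) * x).val = (a * x.val) % m := by
      have : (um : ZMod m) * x = ((a * x.val : ℕ) : ZMod m) := by
        rw [hum]
        push_cast
        rw [ZMod.natCast_val, ZMod.cast_id]
      rw [this, ZMod.val_natCast]
    have hval2 : ((un : ZMod n) * y + c x).val = (a * y.val + a * x.val / m) % n := by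
      have : (un : ZMod n) * y + c x = ((a * y.val + a * x.val / m : ℕ) : ZMod n) := by
        rw [hun, hc]
        push_cast
        rw [ZMod.natCast_val, ZMod.cast_id]
      rw [this, ZMod.val_natCast]
    rw [hgp]
    show ((((um : ZMod m) * x).val + m * (((un : ZMod n) * y + c x).val) : ℕ) : ZMod (m * n))
        = (mulp u) (((x.val + m * y.val : ℕ) : ZMod (m * n)))
    rw [hval1, hval2, mulp_apply, hu]
    -- now pure arithmetic in ZMod (m*n)
    set X := x.val
    set Y := y.val
    set w := a * Y + a * X / m with hw
    set s := w / n with hs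
    have hnat : (a * X) % m + m * (w % n) + m * n * s = a * (X + m * Y) := by
      have h1 : w % n + n * s = w := Nat.mod_add_div w n
      have h2 : (a * X) % m + m * (a * X / m) = a * X := Nat.mod_add_div (a * X) m
      calc (a * X) % m + m * (w % n) + m * n * s
          = (a * X) % m + m * (w % n + n * s) := by ring
        _ = (a * X) % m + m * w := by rw [h1]
        _ = (a * X) % m + m * (a * X / m) + m * (a * Y) := by rw [hw]; ring
        _ = a * X + m * (a * Y) := by rw [h2]
        _ = a * (X + m * Y) := by ring
    have h0 : ((m * n * s : ℕ) : ZMod (m * n)) = 0 := by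
      rw [Nat.cast_mul, ZMod.natCast_self, zero_mul]
    have hz : (((a * X) % m + m * (w % n) : ℕ) : ZMod (m * n))
        = (((a * X) % m + m * (w % n) + m * n * s : ℕ) : ZMod (m * n)) := by
      rw [Nat.cast_add ((a * X) % m + m * (w % n)) (m * n * s), h0, add_zero]
    rw [hz, hnat]
    push_cast
    ring
  -- sign computations
  have hsg : Equiv.Perm.sign (mulp u) = Equiv.Perm.sign g :=
    (Equiv.Perm.sign_eq_sign_of_equiv g (mulp u) e hcomm).symm
  have hs1 : Equiv.Perm.sign (Equiv.prodCongrRight τ) = Equiv.Perm.sign (mulp un) := by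
    rw [Equiv.Perm.sign_prodCongrRight τ]
    have : ∀ x : ZMod m, Equiv.Perm.sign (τ x) = Equiv.Perm.sign (mulp un) := by
      intro x
      have : τ x = (Equiv.addLeft (c x)) * (mulp un) := rfl
      rw [this, map_mul, sign_addLeft_odd hn, one_mul]
    rw [Finset.prod_congr rfl fun x _ => this x, Finset.prod_const, Finset.card_univ, ZMod.card]
    exact units_odd_pow _ hm
  have hs2 : Equiv.Perm.sign (Equiv.prodCongr (mulp um) (Equiv.refl (ZMod n)))
      = Equiv.Perm.sign (mulp um) := by
    have hpc : Equiv.prodCongr (mulp um) (Equiv.refl (ZMod n))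
        = Equiv.prodCongrLeft (fun _ => mulp um) := by
      ext p <;> rfl
    rw [hpc, Equiv.Perm.sign_prodCongrLeft, Finset.prod_const, Finset.card_univ, ZMod.card]
    exact units_odd_pow _ hn
  rw [hsg, hg, map_mul, hs1, hs2]

lemma prime_case (p : ℕ) [hp : Fact p.Prime] (hodd : Odd p) (a : ℕ) (h : a.Coprime p) :
    ((Equiv.Perm.sign (mulp (ZMod.unitOfCoprime a h)) : ℤˣ) : ℤ) = legendreSym p (a : ℤ) := by
  obtain ⟨k, hk⟩ := hodd
  have hp2 : p ≠ 2 := by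
    rintro rfl
    omega
  have hk0 : 0 < k := by
    have := hp.out.two_le
    omega
  set π := mulp (ZMod.unitOfCoprime a h) with hπ
  set v : Fin p → ZMod p := fun i => ((i : ℕ) : ZMod p) with hv
  have hvinj : Function.Injective v := by
    intro i j hij
    have := congrArg ZMod.val hij
    rw [hv] at this
    simp only at this
    rw [ZMod.val_cast_of_lt i.isLt, ZMod.val_cast_of_lt j.isLt] at this
    exact Fin.ext this
  have hcard : Fintype.card (Fin p) = Fintype.card (ZMod p) := by simp [ZMod.card]
  set e : Fin p ≃ ZMod p :=
    Equiv.ofBijective v ((Fintype.bijective_iff_injective_and_card v).mpr ⟨hvinj, hcard⟩) with he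
  set σ : Equiv.Perm (Fin p) := Equiv.permCongr e.symm π with hσ
  have hsign : Equiv.Perm.sign σ = Equiv.Perm.sign π := Equiv.Perm.sign_permCongr e.symm π
  have hev : ∀ i, e i = v i := fun i => rfl
  have hvσ : ∀ i, v (σ i) = (a : ZMod p) * v i := by
    intro i
    have h1 : σ i = e.symm (π (e i)) := by
      rw [hσ]
      simp [Equiv.permCongr_apply]
    rw [← hev, h1, Equiv.apply_symm_apply, hπ, mulp_apply, ZMod.coe_unitOfCoprime, hev]
  -- determinant computation
  have hdetne : Matrix.det (Matrix.vandermonde v) ≠ 0 :=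
    Matrix.det_vandermonde_ne_zero_iff.mpr hvinj
  have hperm : Matrix.det ((Matrix.vandermonde v).submatrix σ id)
      = (Equiv.Perm.sign σ : ℤ) * Matrix.det (Matrix.vandermonde v) :=
    Matrix.det_permute σ (Matrix.vandermonde v)
  have hsub : (Matrix.vandermonde v).submatrix σ id
      = Matrix.vandermonde (fun i => (a : ZMod p) * v i) := by
    ext i j
    simp [Matrix.vandermonde_apply, Matrix.submatrix_apply, hvσ i]
  have hN : ∑ i : Fin p, (Ioi i).card = k * p := by
    have h1 : ∑ i : Fin p, (Ioi i).card = ∑ i ∈ Finset.range p, (p - 1 - i) := by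
      rw [← Fin.sum_univ_eq_sum_range (fun i => p - 1 - i) p]
      exact Finset.sum_congr rfl fun i _ => Fin.card_Ioi i
    have h2 : ∑ i ∈ Finset.range p, (p - 1 - i) = ∑ i ∈ Finset.range p, i := by
      rw [← Finset.sum_range_reflect]
      refine Finset.sum_congr rfl fun i hi => ?_
      rw [Finset.mem_range] at hi
      omega
    have h3 : (∑ i ∈ Finset.range p, i) * 2 = p * (p - 1) := Finset.sum_range_id_mul_two p
    have h4 : p * (p - 1) = (k * p) * 2 := by
      rw [hk]
      have he1 : 2 * k + 1 - 1 = 2 * k := by omega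
      rw [he1]
      ring
    rw [h1, h2]
    omega
  have hdet2 : Matrix.det (Matrix.vandermonde (fun i => (a : ZMod p) * v i))
      = (a : ZMod p) ^ (k * p) * Matrix.det (Matrix.vandermonde v) := by
    rw [Matrix.det_vandermonde, Matrix.det_vandermonde, ← hN]
    rw [← Finset.prod_pow_eq_pow_sum, ← Finset.prod_mul_distrib]
    refine Finset.prod_congr rfl fun i _ => ?_
    rw [← Finset.prod_const, ← Finset.prod_mul_distrib]
    exact Finset.prod_congr rfl fun j _ => by ring
  have hcast : ((Equiv.Perm.sign σ : ℤ) : ZMod p) = (a : ZMod p) ^ (k * p) := by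
    have := hperm
    rw [hsub, hdet2] at this
    exact (mul_right_cancel₀ hdetne this.symm)
  have hfrob : (a : ZMod p) ^ (k * p) = (a : ZMod p) ^ k := by
    rw [mul_comm, pow_mul, ZMod.pow_card]
  have hleg : ((legendreSym p (a : ℤ) : ℤ) : ZMod p) = (a : ZMod p) ^ k := by
    have := legendreSym.eq_pow p (a : ℤ)
    have hpk : p / 2 = k := by omega
    rw [hpk] at this
    rw [this]
    push_cast
    rfl
  -- both sides are ±1 and have equal images in ZMod p
  have hne : ((1 : ℤ) : ZMod p) ≠ ((-1 : ℤ) : ZMod p) := by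
    intro hcontra
    have h2 : ((2 : ℕ) : ZMod p) = 0 := by
      push_cast at hcontra ⊢
      linear_combination hcontra
    rw [ZMod.natCast_eq_zero_iff] at h2
    have := Nat.le_of_dvd (by norm_num) h2
    omega
  have haz : ((a : ℤ) : ZMod p) ≠ 0 := by
    push_cast
    rw [Ne, ZMod.natCast_eq_zero_iff]
    intro hdvd
    have := Nat.Coprime.eq_one_of_dvd h.symm hdvd
    omega
  have hcast2 : ((Equiv.Perm.sign σ : ℤ) : ZMod p) = ((legendreSym p (a : ℤ) : ℤ) : ZMod p) := by
    rw [hcast, hfrob, hleg]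
  rcases Int.units_eq_one_or (Equiv.Perm.sign σ) with hs | hs <;>
    rcases legendreSym.eq_one_or_neg_one (p := p) (a := (a : ℤ)) haz with hl | hl <;>
      rw [hs] at hsign hcast2 <;> rw [hl] at hcast2 ⊢ <;> rw [← hsign] <;>
        first
          | rfl
          | (exfalso; revert hcast2; push_cast; intro hcontra)
  · exact hne (by exact_mod_cast hcontra)
  · exact hne (by exact_mod_cast hcontra.symm)

lemma key (b : ℕ) : ∀ [NeZero b], Odd b → ∀ (a : ℕ) (h : a.Coprime b),
    ((Equiv.Perm.sign (mulp (ZMod.unitOfCoprime a h)) : ℤˣ) : ℤ) = jacobiSym (a : ℤ) b := by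
  induction b using Nat.strong_induction_on with
  | _ b ih =>
    intro inst hbo a h
    rcases eq_or_ne b 1 with rfl | hb1
    · have hsub : (mulp (ZMod.unitOfCoprime a h)) = 1 := by
        ext x
        exact Subsingleton.elim _ _
      rw [hsub, map_one, jacobiSym.one_right]
      rfl
    by_cases hp : b.Prime
    · haveI : Fact b.Prime := ⟨hp⟩
      rw [prime_case b hbo a h, jacobiSym.legendreSym.to_jacobiSym]
    · -- composite case
      have hb2 : 2 ≤ b := by
        have := NeZero.ne b
        omega
      obtain ⟨m, hmdvd, hm2, hmlt⟩ := Nat.exists_dvd_of_not_prime2 hb2 hp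
      obtain ⟨n, hmn⟩ := hmdvd
      have hn1 : n ≠ 1 := by
        rintro rfl
        omega
      have hn0 : n ≠ 0 := by
        rintro rfl
        rw [mul_zero] at hmn
        exact (NeZero.ne b) hmn
      have hm0 : m ≠ 0 := by omega
      have hnlt : n < b := by
        rcases Nat.lt_or_ge n b with h' | h'
        · exact h'
        · exfalso
          have : m * n ≥ 2 * b := by
            calc m * n ≥ 2 * n := Nat.mul_le_mul_right n hm2
              _ ≥ 2 * b := Nat.mul_le_mul_left 2 h'
          omega
      subst hmn
      haveI : NeZero m := ⟨hm0⟩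
      haveI : NeZero n := ⟨hn0⟩
      have hodd : Odd m ∧ Odd n := (Nat.odd_mul).mp hbo
      have h1 : a.Coprime m := Nat.Coprime.coprime_dvd_right ⟨n, rfl⟩ h
      have h2 : a.Coprime n := Nat.Coprime.coprime_dvd_right ⟨m, mul_comm m n⟩ h
      have hstep := step m n hodd.1 hodd.2 a (ZMod.unitOfCoprime a h1)
        (ZMod.unitOfCoprime a h2) (ZMod.unitOfCoprime a h)
        (ZMod.coe_unitOfCoprime a h1) (ZMod.coe_unitOfCoprime a h2)
        (ZMod.coe_unitOfCoprime a h)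
      rw [hstep, Units.val_mul, ih m hmlt hodd.1 a h1, ih n hnlt hodd.2 a h2,
        jacobiSym.mul_right]

end Zolo

theorem zolotarev (a b : ℕ) [NeZero b] (ha : 0 < a) (hb : 0 < b) (hbodd : Odd b)
    (hab : Nat.Coprime a b) (π : Equiv.Perm (ZMod b)) (hπ : ∀ x : ZMod b, π x = (a : ZMod b) * x) :
    (Equiv.Perm.sign π : ℤ) = jacobiSym (a : ℤ) b := by
  have hπ' : π = Zolo.mulp (ZMod.unitOfCoprime a hab) := by
    ext x
    rw [hπ x, Zolo.mulp_apply, ZMod.coe_unitOfCoprime]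
  rw [hπ']
  exact Zolo.key b hbodd a hab
end

section
/- For coprime positive integers a and b, the number of inversions I(a,b) of the permutation x ↦ ax mod b on {0,1,...,b-1} satisfies I(a,b) = -3b·s(a,b) + (1/4)(b-1)(b-2), where s(a,b) is the Dedekind sum. -/
/-- The sawtooth function ((x)) = x - ⌊x⌋ - 1/2 for non-integer x, and 0 for integer x. -/
def saw (x : ℚ) : ℚ := if x.den = 1 then 0 else x - ⌊x⌋ - 1/2

/-- The Dedekind sum s(a,b) = Σ_{k=1}^{b-1} ((k/b))((ka/b)). -/
def dedekindSum (a b : ℕ) : ℚ :=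
  ∑ k ∈ Finset.range b, saw ((k : ℚ) / b) * saw ((k * a : ℚ) / b)

/-- I(a,b): the number of inversions of the permutation x ↦ ax mod b on {0,...,b-1}. -/
def inv' (a b : ℕ) : ℕ :=
  (((Finset.range b) ×ˢ (Finset.range b)).filter
    (fun p => p.1 < p.2 ∧ (a * p.2) % b < (a * p.1) % b)).card

/-!
For `i < j < b` put `r = [a(j-i)]_b`. Then `[aj]_b = ([ai]_b + r) mod b`, and `(i, j)` is an
inversion exactly when this addition carries, so its indicator is `([ai]_b + r - [aj]_b) / b`.
Coprimality gives `r = b ((a(j-i)/b)) + b/2`. Summing over `i < j` expresses `I(a,b)` through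
`Σ k [ak]_b`, `Σ [ak]_b` and `Σ (b - d) ((ad/b))`; since `k ↦ [ak]_b` permutes the residues,
all three reduce to `Σ k ((ak/b)) = b s(a,b)`.
-/

open Finset

lemma sum_range_natCast (n : ℕ) : ∑ k ∈ range n, (k : ℚ) = n * (n - 1) / 2 := by
  have := sum_range_id_mul_two n
  rcases Nat.eq_zero_or_pos n with rfl | hn
  · simp
  rw [← Nat.cast_sum, eq_div_iff two_ne_zero, ← Nat.cast_ofNat, ← Nat.cast_mul, this,
    Nat.cast_mul, Nat.cast_sub hn, Nat.cast_one]

lemma sum_filter_lt_range_product {M : Type*} [AddCommMonoid M] (n : ℕ) (f : ℕ × ℕ → M) :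
    ∑ p ∈ (range n ×ˢ range n).filter (fun p => p.1 < p.2), f p
      = ∑ j ∈ range n, ∑ i ∈ range j, f (i, j) := by
  rw [sum_filter, sum_product_right]
  refine sum_congr rfl fun j hj => ?_
  rw [← sum_filter]
  congr 1
  ext i
  simp only [mem_filter, mem_range] at hj ⊢
  omega

lemma sum_range_sum_range_sub {R : Type*} [CommRing R] (u : ℕ → R) (n : ℕ) :
    ∑ j ∈ range n, ∑ i ∈ range j, (u i - u j)
      = ∑ k ∈ range n, ((n : R) - 2 * k - 1) * u k := by
  induction n with
  | zero => simp
  | succ n ih =>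
    have hcoeff (k : ℕ) :
        (((n + 1 : ℕ) : R) - 2 * k - 1) * u k = ((n : R) - 2 * k - 1) * u k + u k := by
      push_cast; ring
    rw [sum_range_succ, ih, sum_sub_distrib, sum_const, card_range, nsmul_eq_mul]
    simp only [hcoeff, sum_add_distrib, sum_range_succ _ n]
    ring

lemma sum_range_sum_range_apply_sub {R : Type*} [CommRing R] (h : ℕ → R) (h0 : h 0 = 0)
    (n : ℕ) :
    ∑ j ∈ range n, ∑ i ∈ range j, h (j - i) = ∑ d ∈ range n, ((n : R) - d) * h d := by
  induction n with
  | zero => simp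
  | succ n ih =>
    have hrow : ∑ i ∈ range n, h (n - i) = ∑ d ∈ range (n + 1), h d := by
      rw [← sum_range_reflect h (n + 1), sum_range_succ]
      simp [h0]
    have hcoeff (d : ℕ) : (((n + 1 : ℕ) : R) - d) * h d = ((n : R) - d) * h d + h d := by
      push_cast; ring
    rw [sum_range_succ, ih, hrow]
    simp only [hcoeff, sum_add_distrib, sum_range_succ _ n, sub_self, zero_mul]
    ring

lemma ite_add_mod_lt_mod (x m b : ℕ) :
    (if (x + m) % b < x % b then 1 else 0 : ℚ)
      = (((x % b : ℕ) : ℚ) + (m % b : ℕ) - ((x + m) % b : ℕ)) / b := by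
  rcases Nat.eq_zero_or_pos b with rfl | hb
  · simp
  have hcarry := Nat.add_mod_add_ite x m b
  have hm : m % b < b := Nat.mod_lt _ hb
  have hb' : (b : ℚ) ≠ 0 := by positivity
  split_ifs at hcarry ⊢
  · rw [← Nat.cast_add, ← hcarry]; push_cast; field_simp; ring
  · omega
  · omega
  · rw [← Nat.cast_add, ← hcarry]; simp

lemma saw_zero : saw 0 = 0 := by simp [saw]

lemma saw_natCast_div {m b : ℕ} (hb : b ≠ 0) (h : ¬ b ∣ m) :
    saw ((m : ℚ) / b) = ((m % b : ℕ) : ℚ) / b - 1 / 2 := by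
  rw [saw, if_neg (mt (Rat.den_div_natCast_eq_one_iff m b hb).mp h), Int.self_sub_floor,
    Int.fract_div_natCast_eq_div_natCast_mod]

lemma natCast_mul_mod_eq_saw {a b k : ℕ} (hab : a.Coprime b) (hk0 : 0 < k) (hkb : k < b) :
    ((a * k % b : ℕ) : ℚ) = b * saw ((a * k : ℕ) / b) + b / 2 := by
  have hb : (b : ℚ) ≠ 0 := by exact_mod_cast (by omega : b ≠ 0)
  have hndvd : ¬ b ∣ a * k := fun h =>
    (Nat.le_of_dvd hk0 (hab.symm.dvd_of_dvd_mul_left h)).not_gt hkb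
  rw [saw_natCast_div (by omega) hndvd]
  field_simp
  ring

lemma sum_range_mul_mod {a b : ℕ} (hab : a.Coprime b) :
    ∑ k ∈ range b, a * k % b = ∑ k ∈ range b, k := by
  rcases Nat.eq_zero_or_pos b with rfl | hb
  · simp
  have hmaps : Set.MapsTo (fun k => a * k % b) (range b) (range b) :=
    fun k _ => mem_range.mpr (Nat.mod_lt _ hb)
  have hinj : Set.InjOn (fun k => a * k % b) (range b) := fun i hi j hj hij =>
    (Nat.ModEq.cancel_left_of_coprime hab.symm hij).eq_of_lt_of_lt
      (mem_range.mp hi) (mem_range.mp hj)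
  exact sum_nbij _ hmaps hinj (surjOn_of_injOn_of_card_le _ hmaps hinj le_rfl) fun _ _ => rfl

lemma sum_natCast_mul_mod {a b : ℕ} (hab : a.Coprime b) :
    ∑ k ∈ range b, ((a * k % b : ℕ) : ℚ) = b * (b - 1) / 2 := by
  rw [← Nat.cast_sum, sum_range_mul_mod hab, Nat.cast_sum, sum_range_natCast]

lemma sum_saw_mul_div {a b : ℕ} (hab : a.Coprime b) :
    ∑ k ∈ range b, saw ((a * k : ℕ) / b) = 0 := by
  obtain rfl | ⟨n, rfl⟩ : b = 0 ∨ ∃ n, b = n + 1 := by rcases b with _ | n <;> simp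
  · simp
  have h := sum_natCast_mul_mod hab
  rw [sum_range_succ', sum_congr rfl fun k hk =>
    natCast_mul_mod_eq_saw hab k.succ_pos (by simpa using hk)] at h
  rw [sum_range_succ']
  simp only [sum_add_distrib, ← mul_sum, sum_const, card_range, nsmul_eq_mul, mul_zero,
    Nat.zero_mod, Nat.cast_zero, add_zero, zero_div, saw_zero] at h ⊢
  have hn : ((n + 1 : ℕ) : ℚ) ≠ 0 := by positivity
  refine (mul_eq_zero.mp ?_).resolve_left hn
  rw [Nat.cast_succ] at h ⊢
  linear_combination h

lemma inv'_eq_sum (a b : ℕ) :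
    (inv' a b : ℚ)
      = ∑ j ∈ range b, ∑ i ∈ range j, if a * j % b < a * i % b then 1 else 0 := by
  rw [inv', ← filter_filter, card_filter, Nat.cast_sum, sum_filter_lt_range_product]
  push_cast
  rfl

lemma ite_mul_mod_lt_mul_mod_eq {a b i j : ℕ} (hab : a.Coprime b) (hij : i < j) (hjb : j < b) :
    (if a * j % b < a * i % b then 1 else 0 : ℚ)
      = (((a * i % b : ℕ) : ℚ) - (a * j % b : ℕ)) / b + saw ((a * (j - i) : ℕ) / b)
        + 1 / 2 := by
  have hb : (b : ℚ) ≠ 0 := by exact_mod_cast (by omega : b ≠ 0)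
  have hj : a * j = a * i + a * (j - i) := by rw [← mul_add]; congr; omega
  rw [hj, ite_add_mod_lt_mod, natCast_mul_mod_eq_saw (k := j - i) hab (by omega) (by omega)]
  field_simp
  ring

lemma dedekindSum_eq_sum {a b : ℕ} (hab : a.Coprime b) :
    b * dedekindSum a b = ∑ k ∈ range b, k * saw ((a * k : ℕ) / b) := by
  have hterm : ∀ k ∈ range b, (b : ℚ) * (saw ((k : ℚ) / b) * saw ((k * a : ℚ) / b))
      = (k - b / 2) * saw ((a * k : ℕ) / b) := by
    intro k hk
    have hkb := mem_range.mp hk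
    rcases Nat.eq_zero_or_pos k with rfl | hk0
    · simp [saw_zero]
    have hb : (b : ℚ) ≠ 0 := by exact_mod_cast (by omega : b ≠ 0)
    rw [saw_natCast_div (by omega) fun h => (Nat.le_of_dvd hk0 h).not_gt hkb,
      Nat.mod_eq_of_lt hkb]
    push_cast
    field_simp
  rw [dedekindSum, mul_sum, sum_congr rfl hterm]
  simp only [sub_mul, sum_sub_distrib, ← mul_sum, sum_saw_mul_div hab, mul_zero, sub_zero]

lemma sum_natCast_mul_natCast_mul_mod {a b : ℕ} (hab : a.Coprime b) :
    ∑ k ∈ range b, (k : ℚ) * (a * k % b : ℕ)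
      = b * (b * dedekindSum a b) + b ^ 2 * (b - 1) / 4 := by
  have hterm : ∀ k ∈ range b, (k : ℚ) * (a * k % b : ℕ)
      = b * (k * saw ((a * k : ℕ) / b)) + b / 2 * k := by
    intro k hk
    rcases Nat.eq_zero_or_pos k with rfl | hk0
    · simp
    rw [natCast_mul_mod_eq_saw hab hk0 (mem_range.mp hk)]
    ring
  rw [sum_congr rfl hterm, sum_add_distrib, ← mul_sum, ← mul_sum, ← dedekindSum_eq_sum hab,
    sum_range_natCast]
  ring

theorem meyer_general (a b : ℕ) (hb : 0 < b) (hab : Nat.Coprime a b) :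
    (inv' a b : ℚ) = -3 * b * dedekindSum a b + (1 / 4) * (b - 1) * (b - 2) := by
  have hb' : (b : ℚ) ≠ 0 := by positivity
  rw [inv'_eq_sum, sum_congr rfl fun j (hj : j ∈ range b) =>
    sum_congr rfl fun i (hi : i ∈ range j) =>
      ite_mul_mod_lt_mul_mod_eq hab (mem_range.mp hi) (mem_range.mp hj)]
  simp only [sum_add_distrib, ← sum_div]
  rw [sum_range_sum_range_sub (fun k => ((a * k % b : ℕ) : ℚ)),
    sum_range_sum_range_apply_sub (fun d => saw ((a * d : ℕ) / b)) (by simp [saw_zero])]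
  simp only [sub_mul, sum_sub_distrib, ← sum_mul, mul_assoc, ← mul_sum, sum_const, card_range,
    nsmul_eq_mul]
  rw [sum_natCast_mul_mod hab, sum_natCast_mul_natCast_mul_mod hab, sum_saw_mul_div hab,
    ← dedekindSum_eq_sum hab, sum_range_natCast]
  field_simp
  ring

theorem meyer (a b : ℕ) (ha : 0 < a) (hb : 0 < b) (hab : Nat.Coprime a b) :
    (inv' a b : ℚ) = -3 * b * dedekindSum a b + (1 / 4) * (b - 1) * (b - 2) :=
  meyer_general a b hb hab
end

section
/- Let a₁, a₂ be positive integers coprime to a positive integer b. Then 4·I(a₁,b) ≡ 4·I(a₂,b) (mod b) if and only if b divides (a₁-a₂)(a₁a₂-1). -/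
/-- triangular double sum -/
lemma tri_sum (n : ℕ) (g : ℕ → ℤ) :
    ∑ j ∈ Finset.range n, ∑ i ∈ Finset.range j, g i
      = ∑ i ∈ Finset.range n, ((n : ℤ) - 1 - i) * g i := by
  induction n with
  | zero => simp
  | succ n ih =>
    rw [Finset.sum_range_succ, ih, Finset.sum_range_succ]
    rw [← Finset.sum_add_distrib]
    have h1 : ∀ i ∈ Finset.range n, ((n : ℤ) - 1 - i) * g i + g i
        = ((↑(n+1) : ℤ) - 1 - i) * g i := by
      intro i _; push_cast; ring
    rw [Finset.sum_congr rfl h1]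
    have : ((↑(n+1) : ℤ) - 1 - n) * g n = 0 := by push_cast; ring
    rw [this, add_zero]

lemma sum_id_two (n : ℕ) : 2 * ∑ k ∈ Finset.range n, (k : ℤ) = (n : ℤ)^2 - n := by
  induction n with
  | zero => simp
  | succ n ih => rw [Finset.sum_range_succ]; push_cast; push_cast at ih; linarith

lemma sum_sq_six (n : ℕ) : 6 * ∑ k ∈ Finset.range n, (k : ℤ)^2
    = 2*(n : ℤ)^3 - 3*(n : ℤ)^2 + n := by
  induction n with
  | zero => simp
  | succ n ih => rw [Finset.sum_range_succ]; push_cast; push_cast at ih; linarith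

/-- pointwise inversion indicator as a difference of floors -/
lemma ptwise (a b i j : ℕ) (hb : 0 < b) (hij : i < j) :
    (if (a*j) % b < (a*i) % b then (1:ℤ) else 0)
      = ((a*j/b : ℕ) : ℤ) - ((a*i/b : ℕ) : ℤ) - ((a*(j-i)/b : ℕ) : ℤ) := by
  have hb' : (0:ℤ) < b := by exact_mod_cast hb
  have e1 : ((a*i : ℕ):ℤ) = (b:ℤ) * ((a*i/b : ℕ):ℤ) + ((a*i % b : ℕ):ℤ) := by
    exact_mod_cast (Nat.div_add_mod (a*i) b).symm
  have e2 : ((a*j : ℕ):ℤ) = (b:ℤ) * ((a*j/b : ℕ):ℤ) + ((a*j % b : ℕ):ℤ) := by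
    exact_mod_cast (Nat.div_add_mod (a*j) b).symm
  have e3 : ((a*(j-i) : ℕ):ℤ) = (b:ℤ) * ((a*(j-i)/b : ℕ):ℤ) + ((a*(j-i) % b : ℕ):ℤ) := by
    exact_mod_cast (Nat.div_add_mod (a*(j-i)) b).symm
  have hd : ((a*(j-i) : ℕ):ℤ) = ((a*j : ℕ):ℤ) - ((a*i : ℕ):ℤ) := by
    have hnat : a*(j-i) + a*i = a*j := by rw [← Nat.mul_add, Nat.sub_add_cancel hij.le]
    omega
  set q1 : ℤ := ((a*i/b : ℕ):ℤ) with hq1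
  set q2 : ℤ := ((a*j/b : ℕ):ℤ) with hq2
  set q3 : ℤ := ((a*(j-i)/b : ℕ):ℤ) with hq3
  set r1 : ℤ := ((a*i % b : ℕ):ℤ) with hrr1
  set r2 : ℤ := ((a*j % b : ℕ):ℤ) with hrr2
  set r3 : ℤ := ((a*(j-i) % b : ℕ):ℤ) with hrr3
  have key' : (b:ℤ) * (q2 - q1 - q3) = r1 + r3 - r2 := by
    linear_combination e1 + e3 - e2 - hd
  have hr1a : (0:ℤ) ≤ r1 := by positivity
  have hr2a : (0:ℤ) ≤ r2 := by positivity
  have hr3a : (0:ℤ) ≤ r3 := by positivity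
  have hr1b : r1 < b := by rw [hrr1]; exact_mod_cast Nat.mod_lt _ hb
  have hr2b : r2 < b := by rw [hrr2]; exact_mod_cast Nat.mod_lt _ hb
  have hr3b : r3 < b := by rw [hrr3]; exact_mod_cast Nat.mod_lt _ hb
  split_ifs with h
  · have h' : r2 < r1 := by rw [hrr1, hrr2]; exact_mod_cast h
    have h1 : 0 < (b:ℤ) * (q2 - q1 - q3) := by rw [key']; omega
    have h2 : (b:ℤ) * (q2 - q1 - q3) < 2*b := by rw [key']; omega
    have hge : 1 ≤ q2 - q1 - q3 := by
      by_contra hc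
      push_neg at hc
      have hc' : q2 - q1 - q3 ≤ 0 := by omega
      have := mul_le_mul_of_nonneg_left hc' hb'.le
      simp only [mul_zero] at this
      linarith
    have hle : q2 - q1 - q3 ≤ 1 := by
      by_contra hc
      push_neg at hc
      have hc' : 2 ≤ q2 - q1 - q3 := by omega
      have := mul_le_mul_of_nonneg_left hc' hb'.le
      linarith
    linarith
  · have h' : r1 ≤ r2 := by rw [hrr1, hrr2]; exact_mod_cast not_lt.mp h
    have h1 : -(b:ℤ) < (b:ℤ) * (q2 - q1 - q3) := by rw [key']; omega
    have h2 : (b:ℤ) * (q2 - q1 - q3) < b := by rw [key']; omega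
    have hge : 0 ≤ q2 - q1 - q3 := by
      by_contra hc
      push_neg at hc
      have hc' : q2 - q1 - q3 ≤ -1 := by omega
      have := mul_le_mul_of_nonneg_left hc' hb'.le
      linarith
    have hle : q2 - q1 - q3 ≤ 0 := by
      by_contra hc
      push_neg at hc
      have hc' : 1 ≤ q2 - q1 - q3 := by omega
      have := mul_le_mul_of_nonneg_left hc' hb'.le
      linarith
    linarith

/-- the key congruence: 4·a·I(a,b) ≡ -(a-1)² (mod b) -/
lemma key_cong (a b : ℕ) (hb : 0 < b) (h : Nat.Coprime a b) :
    (b : ℤ) ∣ 4 * a * (inv' a b) + ((a : ℤ) - 1)^2 := by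
  set f : ℕ → ℤ := fun k => ((a*k/b : ℕ) : ℤ) with hf
  set r : ℕ → ℤ := fun k => ((a*k % b : ℕ) : ℤ) with hr
  -- permutation property of k ↦ a*k % b on range b
  have hinj : ∀ x ∈ Finset.range b, ∀ y ∈ Finset.range b,
      a*x % b = a*y % b → x = y := by
    intro x hx y hy hxy
    have hx' : x < b := Finset.mem_range.mp hx
    have hy' : y < b := Finset.mem_range.mp hy
    have : x ≡ y [MOD b] := Nat.ModEq.cancel_left_of_coprime h.symm hxy
    rw [Nat.ModEq, Nat.mod_eq_of_lt hx', Nat.mod_eq_of_lt hy'] at this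
    exact this
  have him : (Finset.range b).image (fun k => a*k % b) = Finset.range b := by
    apply Finset.eq_of_subset_of_card_le
    · intro m hm
      obtain ⟨k, _, rfl⟩ := Finset.mem_image.mp hm
      exact Finset.mem_range.mpr (Nat.mod_lt _ hb)
    · rw [Finset.card_image_of_injOn (fun x hx y hy => hinj x hx y hy)]
  have perm_sum : ∀ g : ℕ → ℤ,
      ∑ k ∈ Finset.range b, g (a*k % b) = ∑ m ∈ Finset.range b, g m := by
    intro g
    conv_rhs => rw [← him]
    rw [Finset.sum_image hinj]
  -- the inversion count as a floor sum
  have hI0 : (inv' a b : ℤ)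
      = ∑ j ∈ Finset.range b, ∑ i ∈ Finset.range j, (f j - f i - f (j-i)) := by
    rw [inv', Finset.card_filter]
    push_cast
    rw [Finset.sum_product]
    rw [Finset.sum_comm]
    apply Finset.sum_congr rfl
    intro j hj
    have hjb : j < b := Finset.mem_range.mp hj
    have hsub : Finset.range j = (Finset.range b).filter (· < j) := by
      ext x; simp only [Finset.mem_range, Finset.mem_filter]; omega
    rw [hsub, Finset.sum_filter]
    apply Finset.sum_congr rfl
    intro i _
    by_cases hij : i < j
    · simp only [hij, if_true, true_and]
      exact ptwise a b i j hb hij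
    · simp [hij]
  -- rewrite as single sum with coefficients
  set T : ℤ := ∑ k ∈ Finset.range b, (k : ℤ) * f k with hT0
  set F : ℤ := ∑ k ∈ Finset.range b, f k with hF0
  set F2 : ℤ := ∑ k ∈ Finset.range b, (f k)^2 with hF20
  set S1 : ℤ := ∑ k ∈ Finset.range b, (k : ℤ) with hS10
  set S2 : ℤ := ∑ k ∈ Finset.range b, (k : ℤ)^2 with hS20
  have hA1 : ∑ j ∈ Finset.range b, ∑ i ∈ Finset.range j, f j = T := by
    apply Finset.sum_congr rfl
    intro j _
    rw [Finset.sum_const, Finset.card_range, nsmul_eq_mul]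
  have hA2 : ∑ j ∈ Finset.range b, ∑ i ∈ Finset.range j, f i
      = ∑ i ∈ Finset.range b, ((b:ℤ) - 1 - i) * f i := tri_sum b f
  have hA3 : ∑ j ∈ Finset.range b, ∑ i ∈ Finset.range j, f (j-i)
      = ∑ i ∈ Finset.range b, ((b:ℤ) - 1 - i) * f (i+1) := by
    rw [← tri_sum b (fun i => f (i+1))]
    apply Finset.sum_congr rfl
    intro j _
    rw [← Finset.sum_range_reflect (fun i => f (i+1)) j]
    apply Finset.sum_congr rfl
    intro i hi
    have : i < j := Finset.mem_range.mp hi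
    congr 1
    omega
  have hshift : ∑ i ∈ Finset.range b, ((b:ℤ) - 1 - i) * f (i+1)
      = ∑ k ∈ Finset.range b, ((b:ℤ) - k) * f k := by
    obtain ⟨m, rfl⟩ : ∃ m, b = m + 1 := ⟨b - 1, by omega⟩
    rw [Finset.sum_range_succ' (fun k => ((↑(m+1):ℤ) - k) * f k) m]
    rw [Finset.sum_range_succ (fun i => ((↑(m+1):ℤ) - 1 - i) * f (i+1)) m]
    have hz : ((↑(m+1):ℤ) - 1 - m) * f (m+1) = 0 := by push_cast; ring
    have hz0 : ((↑(m+1):ℤ) - (0:ℕ)) * f 0 = 0 := by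
      have : f 0 = 0 := by simp [hf]
      rw [this, mul_zero]
    rw [hz, add_zero, hz0, add_zero]
    apply Finset.sum_congr rfl
    intro i _
    push_cast
    ring
  have hI : (inv' a b : ℤ) = 3*T + F - 2*b*F := by
    rw [hI0]
    have : ∀ j ∈ Finset.range b, ∑ i ∈ Finset.range j, (f j - f i - f (j-i))
        = (∑ i ∈ Finset.range j, f j) - (∑ i ∈ Finset.range j, f i)
          - (∑ i ∈ Finset.range j, f (j-i)) := by
      intro j _
      rw [← Finset.sum_sub_distrib, ← Finset.sum_sub_distrib]
    rw [Finset.sum_congr rfl this, Finset.sum_sub_distrib, Finset.sum_sub_distrib,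
      hA1, hA2, hA3, hshift]
    have e1 : ∑ i ∈ Finset.range b, ((b:ℤ) - 1 - i) * f i
        = b*F - F - T := by
      rw [hF0, hT0, Finset.mul_sum, ← Finset.sum_sub_distrib, ← Finset.sum_sub_distrib]
      apply Finset.sum_congr rfl
      intro i _; ring
    have e2 : ∑ k ∈ Finset.range b, ((b:ℤ) - k) * f k = b*F - T := by
      rw [hF0, hT0, Finset.mul_sum, ← Finset.sum_sub_distrib]
      apply Finset.sum_congr rfl
      intro i _; ring
    rw [e1, e2]
    ring
  -- basic identities
  have hE1 : ∀ k, (a:ℤ) * k = b * f k + r k := by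
    intro k
    have := Nat.div_add_mod (a*k) b
    have hc : ((b * (a*k/b) + a*k % b : ℕ) : ℤ) = ((a*k : ℕ) : ℤ) := by rw [this]
    push_cast at hc
    simp only [hf, hr]
    push_cast
    linarith
  have hsum1 : ∑ k ∈ Finset.range b, r k = S1 := perm_sum (fun m => (m:ℤ))
  have hsum2 : ∑ k ∈ Finset.range b, (r k)^2 = S2 := perm_sum (fun m => ((m:ℤ))^2)
  have hF : (b:ℤ) * F = ((a:ℤ) - 1) * S1 := by
    have h1 : ∑ k ∈ Finset.range b, ((a:ℤ) * k)
        = ∑ k ∈ Finset.range b, ((b:ℤ) * f k + r k) :=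
      Finset.sum_congr rfl (fun k _ => hE1 k)
    rw [Finset.sum_add_distrib, ← Finset.mul_sum, ← Finset.mul_sum, hsum1] at h1
    rw [← hS10, ← hF0] at h1
    linarith
  have hTe : (a:ℤ)^2 * S2 - 2*a*b*T + b^2*F2 = S2 := by
    have h1 : S2 = ∑ k ∈ Finset.range b, (r k)^2 := hsum2.symm
    have h2 : ∀ k ∈ Finset.range b, (r k)^2
        = (a:ℤ)^2 * (k:ℤ)^2 - 2*(a:ℤ)*(b:ℤ)*((k:ℤ) * f k) + (b:ℤ)^2 * (f k)^2 := by
      intro k _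
      linear_combination (-(r k + (a:ℤ)*k - (b:ℤ)*f k)) * (hE1 k)
    rw [Finset.sum_congr rfl h2] at h1
    rw [Finset.sum_add_distrib, Finset.sum_sub_distrib] at h1
    rw [← Finset.mul_sum, ← Finset.mul_sum, ← Finset.mul_sum] at h1
    rw [← hS20, ← hT0, ← hF20] at h1
    linarith
  have hS1v : 2 * S1 = (b:ℤ)^2 - b := sum_id_two b
  have hS2v : 6 * S2 = 2*(b:ℤ)^3 - 3*(b:ℤ)^2 + b := sum_sq_six b
  -- assemble
  refine ⟨((a:ℤ)^2-1)*(2*(b:ℤ)-3) + 6*F2 + 2*(a:ℤ)*((a:ℤ)-1) - 8*(a:ℤ)*F, ?_⟩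
  have hbne : (b:ℤ) ≠ 0 := by exact_mod_cast hb.ne'
  apply mul_left_cancel₀ hbne
  linear_combination (4*(a:ℤ)*(b:ℤ))*hI - 6*hTe + ((a:ℤ)^2-1)*hS2v
    + 4*(a:ℤ)*hF + 2*(a:ℤ)*((a:ℤ)-1)*hS1v

theorem four_inv_congr_iff_dvd (a₁ a₂ b : ℕ) (ha₁ : 0 < a₁) (ha₂ : 0 < a₂) (hb : 0 < b)
    (h₁ : Nat.Coprime a₁ b) (h₂ : Nat.Coprime a₂ b) :
    (4 * inv' a₁ b : ℤ) ≡ 4 * inv' a₂ b [ZMOD (b : ℤ)] ↔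
      (b : ℤ) ∣ ((a₁ : ℤ) - a₂) * ((a₁ : ℤ) * a₂ - 1) := by
  obtain ⟨q₁, hq₁⟩ := key_cong a₁ b hb h₁
  obtain ⟨q₂, hq₂⟩ := key_cong a₂ b hb h₂
  rw [Int.modEq_iff_dvd]
  constructor
  · rintro ⟨d, hd⟩
    exact ⟨(a₂:ℤ)*q₁ - (a₁:ℤ)*q₂ + (a₁:ℤ)*(a₂:ℤ)*d,
      by linear_combination (a₂:ℤ)*hq₁ - (a₁:ℤ)*hq₂ + (a₁:ℤ)*(a₂:ℤ)*hd⟩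
  · rintro ⟨e, he⟩
    have hcop : IsCoprime ((b:ℤ)) ((a₁:ℤ) * (a₂:ℤ)) := by
      rw [Int.isCoprime_iff_gcd_eq_one]
      have : Nat.Coprime b (a₁ * a₂) := (Nat.Coprime.mul h₁ h₂).symm
      exact_mod_cast this
    have hdvd : (b:ℤ) ∣ ((a₁:ℤ) * (a₂:ℤ)) * (4 * (inv' a₂ b : ℤ) - 4 * (inv' a₁ b : ℤ)) := by
      refine ⟨(a₁:ℤ)*q₂ - (a₂:ℤ)*q₁ + e, ?_⟩
      linear_combination (a₁:ℤ)*hq₂ - (a₂:ℤ)*hq₁ + he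
    exact hcop.dvd_of_dvd_mul_left hdvd
end

section
/- Let a₁, a₂ be positive integers coprime to a positive integer b. Then 6·s(a₁,b) - 6·s(a₂,b) is an integer if and only if 2b divides (a₁-a₂)(b-1)(b+a₁a₂-1). -/
/-!
For `0 < k < b` and `a` coprime to `b`, `((k/b)) = k/b - 1/2` and `((ka/b)) = r_k/b - 1/2` with
`r_k = ka mod b`, and `k ↦ r_k` permutes `{0, …, b-1}`. Hence `6 s(a,b) = N(a)/b - 3(b-1)/2`, where
`N(a) = 6 ∑ k r_k / b` is an integer, and the left-hand side says `b ∣ N(a₁) - N(a₂)`.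
Substituting `r_k = ka - b⌊ka/b⌋` into `∑ r_k² = ∑ k²` gives the congruence
`2a N(a) ≡ (a² + 1)(b - 1)(2b - 1) mod 6b`. Multiplying by the unit `a₁a₂` modulo `b`, the condition
becomes `2b ∣ (a₁ - a₂)(a₁a₂ - 1)(b - 1)`, and since `(a₁ - a₂)(b - 1)` is even this differs from
the stated divisibility by a multiple of `2b`.
-/

open Finset

lemma saw_natCast_div_natCast {m b : ℕ} (hb : 0 < b) (hm : ¬ b ∣ m) :
    saw ((m : ℚ) / b) = ((m % b : ℕ) : ℚ) / b - 1 / 2 := by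
  rw [saw, if_neg (by rwa [Rat.den_div_natCast_eq_one_iff m b hb.ne']), Int.self_sub_floor,
    Int.fract_div_natCast_eq_div_natCast_mod]

lemma sum_range_comp_mul_mod {M : Type*} [AddCommMonoid M] {a b : ℕ} (h : a.Coprime b)
    (g : ℕ → M) : ∑ k ∈ range b, g (k * a % b) = ∑ k ∈ range b, g k := by
  rcases Nat.eq_zero_or_pos b with rfl | hb
  · simp
  have maps : Set.MapsTo (fun k => k * a % b) (range b) (range b) := fun k _ => by
    simpa using Nat.mod_lt _ hb
  have inj : Set.InjOn (fun k => k * a % b) (range b) := fun k hk j hj hkj => by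
    simpa [Nat.ModEq, Nat.mod_eq_of_lt (mem_range.1 hk), Nat.mod_eq_of_lt (mem_range.1 hj)]
      using Nat.ModEq.cancel_right_of_coprime h.symm hkj
  exact sum_nbij _ maps inj (surjOn_of_injOn_of_card_le _ maps inj le_rfl) fun _ _ => rfl

lemma six_mul_sum_range_sq (n : ℕ) :
    6 * ∑ k ∈ range n, (k : ℤ) ^ 2 = n * (n - 1) * (2 * n - 1) := by
  induction n with
  | zero => simp
  | succ m ih => rw [sum_range_succ, mul_add, ih]; push_cast; ring

lemma dedekindSum_eq_sum_mul_mod {a b : ℕ} (hb : 0 < b) (h : a.Coprime b) :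
    dedekindSum a b = (∑ k ∈ range b, (k : ℚ) * (k * a % b : ℕ)) / b ^ 2 - (b - 1) / 4 := by
  have hb' : (b : ℚ) ≠ 0 := by exact_mod_cast hb.ne'
  have term : ∀ k ∈ range b, saw ((k : ℚ) / b) * saw ((k * a : ℚ) / b) =
      k * (k * a % b : ℕ) / b ^ 2 - k / (2 * b) - (k * a % b : ℕ) / (2 * b) + 1 / 4
        - if k = 0 then 1 / 4 else 0 := by
    intro k hk
    rcases Nat.eq_zero_or_pos k with rfl | hk0
    · simp [saw]
    have hkb : ¬ b ∣ k := Nat.not_dvd_of_pos_of_lt hk0 (mem_range.1 hk)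
    have hkab : ¬ b ∣ k * a := fun hd => hkb (h.symm.dvd_of_dvd_mul_right hd)
    rw [saw_natCast_div_natCast hb hkb, Nat.mod_eq_of_lt (mem_range.1 hk), ← Nat.cast_mul,
      saw_natCast_div_natCast hb hkab, if_neg hk0.ne']
    field_simp
    ring
  have sum_mod : ∑ k ∈ range b, ((k * a % b : ℕ) : ℚ) = ∑ k ∈ range b, (k : ℚ) :=
    sum_range_comp_mul_mod h (fun n => (n : ℚ))
  rw [dedekindSum, sum_congr rfl term]
  simp only [sum_sub_distrib, sum_add_distrib, ← sum_div, sum_const, card_range, nsmul_eq_mul,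
    sum_ite_eq', mem_range, hb, if_true, sum_mod, sum_range_natCast]
  field_simp
  ring

/-- `6 ∑ k (k a mod b) / b`, written with floors so that it is visibly an integer. -/
def dedekindNum (a b : ℕ) : ℤ :=
  a * (b - 1) * (2 * b - 1) - 6 * ∑ k ∈ range b, (k : ℤ) * (k * a / b : ℕ)

lemma natCast_mod_eq_sub_mul_div (m b : ℕ) : ((m % b : ℕ) : ℤ) = m - b * (m / b : ℕ) := by
  rw [Int.natCast_mod, Int.emod_def, Int.natCast_div]

lemma six_mul_sum_mul_mod (a b : ℕ) :
    6 * ∑ k ∈ range b, (k : ℤ) * (k * a % b : ℕ) = b * dedekindNum a b := by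
  have expand : ∑ k ∈ range b, (k : ℤ) * (k * a % b : ℕ) =
      a * ∑ k ∈ range b, (k : ℤ) ^ 2 - b * ∑ k ∈ range b, (k : ℤ) * (k * a / b : ℕ) := by
    simp only [mul_sum, ← sum_sub_distrib, natCast_mod_eq_sub_mul_div, Nat.cast_mul]
    exact sum_congr rfl fun k _ => by ring
  rw [dedekindNum, expand]
  linear_combination (a : ℤ) * six_mul_sum_range_sq b

lemma six_mul_dedekindSum {a b : ℕ} (hb : 0 < b) (h : a.Coprime b) :
    6 * dedekindSum a b = dedekindNum a b / b - 3 * (b - 1) / 2 := by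
  have hb' : (b : ℚ) ≠ 0 := by exact_mod_cast hb.ne'
  have hsum : ∑ k ∈ range b, (k : ℚ) * (k * a % b : ℕ) = b * dedekindNum a b / 6 := by
    have := congrArg (Int.cast (R := ℚ)) (six_mul_sum_mul_mod a b)
    simp only [Int.cast_mul, Int.cast_sum, Int.cast_natCast, Int.cast_ofNat] at this
    linear_combination this / 6
  rw [dedekindSum_eq_sum_mul_mod hb h, hsum]
  field_simp
  ring

lemma two_mul_mul_dedekindNum_modEq {a b : ℕ} (hb : 0 < b) (h : a.Coprime b) :
    2 * a * dedekindNum a b ≡ (a ^ 2 + 1) * (b - 1) * (2 * b - 1) [ZMOD 6 * b] := by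
  set T := ∑ k ∈ range b, (k : ℤ) * (k * a / b : ℕ)
  set U := ∑ k ∈ range b, ((k * a / b : ℕ) : ℤ) ^ 2
  have expand : ∑ k ∈ range b, ((k * a % b : ℕ) : ℤ) ^ 2 =
      a ^ 2 * ∑ k ∈ range b, (k : ℤ) ^ 2 - 2 * a * b * T + b ^ 2 * U := by
    simp only [T, U, mul_sum, ← sum_sub_distrib, ← sum_add_distrib, natCast_mod_eq_sub_mul_div,
      Nat.cast_mul]
    exact sum_congr rfl fun k _ => by ring
  rw [sum_range_comp_mul_mod h (fun n => (n : ℤ) ^ 2)] at expand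
  have twelve_mul : 12 * a * T = (a ^ 2 - 1) * (b - 1) * (2 * b - 1) + 6 * b * U := by
    refine mul_left_cancel₀ (show (b : ℤ) ≠ 0 by exact_mod_cast hb.ne') ?_
    linear_combination ((a : ℤ) ^ 2 - 1) * six_mul_sum_range_sq b + 6 * expand
  rw [Int.modEq_iff_dvd]
  exact ⟨U, by rw [dedekindNum]; linear_combination twelve_mul⟩

lemma exists_intCast_eq_div_iff {p q : ℤ} (hq : q ≠ 0) :
    (∃ n : ℤ, (p / q : ℚ) = n) ↔ q ∣ p := by
  rw [← Rat.den_div_intCast_eq_one_iff p q hq, Rat.den_eq_one_iff]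
  exact ⟨fun ⟨n, hn⟩ => by rw [hn, Rat.num_intCast], fun h => ⟨_, h.symm⟩⟩

lemma even_sub_mul_sub_one {a₁ a₂ b : ℤ} (h₁ : IsCoprime a₁ b) (h₂ : IsCoprime a₂ b) :
    Even ((a₁ - a₂) * (b - 1)) := by
  rcases Int.even_or_odd b with hb | hb
  · have odd_of_isCoprime {a : ℤ} (h : IsCoprime a b) : Odd a :=
      Int.not_even_iff_odd.1 fun ha => by
        simpa [Int.isUnit_iff] using
          h.isUnit_of_dvd' (even_iff_two_dvd.1 ha) (even_iff_two_dvd.1 hb)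
    exact ((odd_of_isCoprime h₁).sub_odd (odd_of_isCoprime h₂)).mul_right _
  · exact (hb.sub_odd odd_one).mul_left _

lemma dvd_sub_iff_of_two_mul_modEq {a₁ a₂ b N₁ N₂ : ℤ} (h₁ : IsCoprime a₁ b)
    (h₂ : IsCoprime a₂ b)
    (hN₁ : 2 * a₁ * N₁ ≡ (a₁ ^ 2 + 1) * (b - 1) * (2 * b - 1) [ZMOD 2 * b])
    (hN₂ : 2 * a₂ * N₂ ≡ (a₂ ^ 2 + 1) * (b - 1) * (2 * b - 1) [ZMOD 2 * b]) :
    b ∣ N₁ - N₂ ↔ 2 * b ∣ (a₁ - a₂) * (b - 1) * (b + a₁ * a₂ - 1) := by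
  have hmod : 2 * (a₁ * a₂ * (N₁ - N₂)) ≡
      (a₁ - a₂) * (a₁ * a₂ - 1) * (b - 1) * (2 * b - 1) [ZMOD 2 * b] := by
    convert (hN₁.mul_left a₂).sub (hN₂.mul_left a₁) using 1 <;> ring
  have hshift : (a₁ - a₂) * (b - 1) * (b + a₁ * a₂ - 1) =
      (a₁ - a₂) * (a₁ * a₂ - 1) * (b - 1) + b * ((a₁ - a₂) * (b - 1)) := by ring
  calc b ∣ N₁ - N₂ ↔ b ∣ a₁ * a₂ * (N₁ - N₂) :=
        ⟨(Dvd.dvd.mul_left · _), (h₁.mul_left h₂).symm.dvd_of_dvd_mul_left⟩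
    _ ↔ 2 * b ∣ 2 * (a₁ * a₂ * (N₁ - N₂)) := (mul_dvd_mul_iff_left two_ne_zero).symm
    _ ↔ 2 * b ∣ (a₁ - a₂) * (a₁ * a₂ - 1) * (b - 1) * (2 * b - 1) := hmod.dvd_iff
    _ ↔ 2 * b ∣ (a₁ - a₂) * (a₁ * a₂ - 1) * (b - 1) :=
        ⟨IsCoprime.dvd_of_dvd_mul_right ⟨1, -1, by ring⟩, (Dvd.dvd.mul_right · _)⟩
    _ ↔ 2 * b ∣ (a₁ - a₂) * (b - 1) * (b + a₁ * a₂ - 1) := by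
        rw [hshift, dvd_add_left (mul_comm 2 b ▸ mul_dvd_mul_left b
          (even_iff_two_dvd.1 (even_sub_mul_sub_one h₁ h₂)))]

theorem six_int_iff_dvd_general (a₁ a₂ b : ℕ) (hb : 0 < b)
    (h₁ : Nat.Coprime a₁ b) (h₂ : Nat.Coprime a₂ b) :
    (∃ n : ℤ, 6 * dedekindSum a₁ b - 6 * dedekindSum a₂ b = n) ↔
      (2 * b : ℤ) ∣ ((a₁ : ℤ) - a₂) * ((b : ℤ) - 1) * ((b : ℤ) + (a₁ : ℤ) * a₂ - 1) := by
  have hdiff : 6 * dedekindSum a₁ b - 6 * dedekindSum a₂ b =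
      ((dedekindNum a₁ b - dedekindNum a₂ b : ℤ) : ℚ) / (b : ℤ) := by
    rw [six_mul_dedekindSum hb h₁, six_mul_dedekindSum hb h₂]
    push_cast
    ring
  have modEq {a : ℕ} (h : a.Coprime b) :
      2 * a * dedekindNum a b ≡ (a ^ 2 + 1) * (b - 1) * (2 * b - 1) [ZMOD 2 * b] :=
    Int.ModEq.of_mul_left 3 (by simpa [← mul_assoc] using two_mul_mul_dedekindNum_modEq hb h)
  rw [hdiff, exists_intCast_eq_div_iff (by exact_mod_cast hb.ne')]
  exact dvd_sub_iff_of_two_mul_modEq (Nat.isCoprime_iff_coprime.2 h₁)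
    (Nat.isCoprime_iff_coprime.2 h₂) (modEq h₁) (modEq h₂)

theorem six_int_iff_dvd (a₁ a₂ b : ℕ) (ha₁ : 0 < a₁) (ha₂ : 0 < a₂) (hb : 0 < b)
    (h₁ : Nat.Coprime a₁ b) (h₂ : Nat.Coprime a₂ b) :
    (∃ n : ℤ, 6 * dedekindSum a₁ b - 6 * dedekindSum a₂ b = n) ↔
      (2 * b : ℤ) ∣ ((a₁ : ℤ) - a₂) * ((b : ℤ) - 1) * ((b : ℤ) + (a₁ : ℤ) * a₂ - 1) :=
  six_int_iff_dvd_general a₁ a₂ b hb h₁ h₂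
end

section
/- Let a₁, a₂ be positive integers coprime to a positive integer b, and let m ∈ {b, 2b, 4b}. Then 4·a₁·a₂·(I(a₁,b) - I(a₂,b)) ≡ (a₁-a₂)(b-1)(b+a₁a₂-1) (mod m). -/
namespace KeyCongAux

open Finset

variable (a b : ℕ)

abbrev Tri : Finset (ℕ × ℕ) := (range b ×ˢ range b).filter (fun p => p.1 < p.2)

def Rf (k : ℕ) : ℤ := ((a * k % b : ℕ) : ℤ)

lemma gauss1 (n : ℕ) : 2 * ∑ k ∈ Finset.range n, (k : ℤ) = (n : ℤ) * ((n : ℤ) - 1) := by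
  induction n with
  | zero => simp
  | succ m ih =>
    rw [Finset.sum_range_succ]
    push_cast
    push_cast at ih
    linarith

lemma gauss2 (n : ℕ) : 6 * ∑ k ∈ Finset.range n, (k : ℤ) ^ 2 =
    (n : ℤ) * ((n : ℤ) - 1) * (2 * (n : ℤ) - 1) := by
  induction n with
  | zero => simp
  | succ m ih =>
    rw [Finset.sum_range_succ]
    push_cast
    push_cast at ih
    nlinarith [ih]

lemma sum_perm (h : Nat.Coprime a b) (f : ℕ → ℤ) :
    ∑ k ∈ range b, f (a * k % b) = ∑ k ∈ range b, f k := by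
  rcases Nat.eq_zero_or_pos b with rfl | hb
  · simp
  have hinj : ∀ i ∈ range b, ∀ j ∈ range b, a * i % b = a * j % b → i = j := by
    intro i hi j hj hij
    simp only [mem_range] at hi hj
    have h2 : i ≡ j [MOD b] := Nat.ModEq.cancel_left_of_coprime h.symm hij
    calc i = i % b := (Nat.mod_eq_of_lt hi).symm
      _ = j % b := h2
      _ = j := Nat.mod_eq_of_lt hj
  have himg : (range b).image (fun k => a * k % b) = range b := by
    apply Finset.eq_of_subset_of_card_le
    · intro x hx
      simp only [mem_image, mem_range] at hx ⊢
      obtain ⟨k, _, rfl⟩ := hx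
      exact Nat.mod_lt _ hb
    · rw [Finset.card_image_of_injOn fun i hi j hj hij => hinj i hi j hj hij]
  calc ∑ k ∈ range b, f (a * k % b) = ∑ x ∈ (range b).image (fun k => a * k % b), f x :=
        (Finset.sum_image hinj).symm
    _ = ∑ k ∈ range b, f k := by rw [himg]

lemma pointwise (h : Nat.Coprime a b) (hb : 0 < b) {i j : ℕ}
    (hi : i < b) (hj : j < b) (hij : i < j) :
    (if a * j % b < a * i % b then (b : ℤ) else 0) =
      ((a * (j - i) % b : ℕ) : ℤ) + ((a * i % b : ℕ) : ℤ) - ((a * j % b : ℕ) : ℤ) := by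
  set x := a * (j - i) % b with hxdef
  set y := a * i % b with hydef
  set z := a * j % b with hzdef
  have hxb : x < b := Nat.mod_lt _ hb
  have hyb : y < b := Nat.mod_lt _ hb
  have hzb : z < b := Nat.mod_lt _ hb
  have hxpos : 0 < x := by
    rcases Nat.eq_zero_or_pos x with hx0 | h'
    · exfalso
      have hdvd : b ∣ a * (j - i) := Nat.dvd_of_mod_eq_zero hx0
      have hdvd2 : b ∣ (j - i) := Nat.Coprime.dvd_of_dvd_mul_left h.symm hdvd
      have h1 : b ≤ j - i := Nat.le_of_dvd (by omega) hdvd2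
      omega
    · exact h'
  have hyz : y ≠ z := by
    intro he
    have h2 : i ≡ j [MOD b] := Nat.ModEq.cancel_left_of_coprime h.symm he
    have : i % b = j % b := h2
    rw [Nat.mod_eq_of_lt hi, Nat.mod_eq_of_lt hj] at this
    omega
  have hsum : a * (j - i) + a * i = a * j := by
    rw [← Nat.mul_add]
    congr 1
    omega
  have hd1 : a * (j - i) = b * (a * (j - i) / b) + x := (Nat.div_add_mod _ _).symm
  have hd2 : a * i = b * (a * i / b) + y := (Nat.div_add_mod _ _).symm
  have hd3 : a * j = b * (a * j / b) + z := (Nat.div_add_mod _ _).symm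
  have hk : (x : ℤ) + y - z =
      (b : ℤ) * ((a * j / b : ℕ) - (a * (j - i) / b : ℕ) - (a * i / b : ℕ)) := by
    have := congrArg (fun n : ℕ => (n : ℤ)) hsum
    push_cast at this
    have e1 := congrArg (fun n : ℕ => (n : ℤ)) hd1
    have e2 := congrArg (fun n : ℕ => (n : ℤ)) hd2
    have e3 := congrArg (fun n : ℕ => (n : ℤ)) hd3
    push_cast at e1 e2 e3 ⊢
    linarith [this, e1, e2, e3]
  set k : ℤ := (a * j / b : ℕ) - (a * (j - i) / b : ℕ) - (a * i / b : ℕ) with hkd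
  have hbz : (0 : ℤ) < b := by exact_mod_cast hb
  have hlow : (-(b : ℤ)) < b * k := by
    rw [← hk]; push_cast; omega
  have hhigh : (b : ℤ) * k < 2 * b := by
    rw [← hk]; push_cast; omega
  have hk0 : (0 : ℤ) ≤ k := by nlinarith
  have hk2 : k ≤ 1 := by nlinarith
  rcases eq_or_lt_of_le hk0 with hk00 | hkp
  · have hxyz : (x : ℤ) + y - z = 0 := by rw [hk, ← hk00]; ring
    have : ¬ (z < y) := by push_cast at hxyz ⊢; omega
    rw [if_neg this]
    push_cast at hxyz ⊢
    omega
  · have hk1 : k = 1 := by omega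
    have hxyz : (x : ℤ) + y - z = b := by rw [hk, hk1]; ring
    have : z < y := by push_cast at hxyz; omega
    rw [if_pos this]
    push_cast at hxyz ⊢
    omega

lemma sumC : ∑ p ∈ Tri b, Rf a b p.2 = ∑ j ∈ range b, (j : ℤ) * Rf a b j := by
  rw [Finset.sum_filter, Finset.sum_product]
  rw [Finset.sum_comm]
  refine Finset.sum_congr rfl fun j hj => ?_
  simp only [mem_range] at hj
  rw [← Finset.sum_filter]
  have : (range b).filter (fun i => i < j) = range j := by
    ext i; simp only [mem_filter, mem_range]; omega
  rw [this]
  simp [mul_comm]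

lemma sumB : ∑ p ∈ Tri b, Rf a b p.1 = ∑ i ∈ range b, ((b : ℤ) - 1 - i) * Rf a b i := by
  rw [Finset.sum_filter, Finset.sum_product]
  refine Finset.sum_congr rfl fun i hi => ?_
  simp only [mem_range] at hi
  rw [← Finset.sum_filter]
  have : (range b).filter (fun j => i < j) = Ico (i+1) b := by
    ext j; simp only [mem_filter, mem_range, mem_Ico]; omega
  rw [this]
  have h2 : ((b - (i+1) : ℕ) : ℤ) = (b : ℤ) - 1 - i := by omega
  simp [Nat.card_Ico, ← h2, mul_comm]

lemma sumA :
    ∑ p ∈ Tri b, Rf a b (p.2 - p.1) = ∑ d ∈ range b, ((b : ℤ) - d) * Rf a b d := by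
  have step1 : ∑ p ∈ Tri b, Rf a b (p.2 - p.1) =
      ∑ p ∈ (range b ×ˢ range b).filter (fun p => 0 < p.2 ∧ p.1 + p.2 < b), Rf a b p.2 := by
    refine Finset.sum_nbij' (fun p => (p.1, p.2 - p.1)) (fun p => (p.1, p.1 + p.2)) ?_ ?_ ?_ ?_ ?_
    · intro p hp
      simp only [Tri, mem_filter, mem_product, mem_range] at hp ⊢
      omega
    · intro p hp
      simp only [Tri, mem_filter, mem_product, mem_range] at hp ⊢
      omega
    · intro p hp
      simp only [Tri, mem_filter, mem_product, mem_range] at hp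
      ext <;> simp <;> omega
    · intro p hp
      simp only [mem_filter, mem_product, mem_range] at hp
      ext <;> simp <;> omega
    · intro p hp; rfl
  rw [step1, Finset.sum_filter, Finset.sum_product, Finset.sum_comm]
  refine Finset.sum_congr rfl fun d hd => ?_
  simp only [mem_range] at hd
  rcases Nat.eq_zero_or_pos d with rfl | hdpos
  · simp [Rf]
  · have hcond : ∀ i, (0 < d ∧ i + d < b) ↔ (i + d < b) := fun i => by omega
    simp only [hcond]
    rw [← Finset.sum_filter]
    have : (range b).filter (fun i => i + d < b) = range (b - d) := by
      ext i; simp only [mem_filter, mem_range]; omega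
    rw [this]
    have h2 : ((b - d : ℕ) : ℤ) = (b : ℤ) - d := by omega
    simp [← h2, mul_comm]

lemma hbI : (b : ℤ) * inv' a b =
    ∑ p ∈ Tri b, (if a * p.2 % b < a * p.1 % b then (b : ℤ) else 0) := by
  rw [inv', ← Finset.filter_filter, Finset.card_filter]
  push_cast
  rw [Finset.mul_sum]
  refine Finset.sum_congr rfl fun p _ => ?_
  split <;> simp

/-- The key congruence: `4*b ∣ 4*a*I(a,b) - (b-1)*(a-1)*(a+b-1)`. -/
lemma key (h : Nat.Coprime a b) (hb : 0 < b) :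
    (4 * (b : ℤ)) ∣ 4 * (a : ℤ) * (inv' a b : ℤ) -
      ((b : ℤ) - 1) * ((a : ℤ) - 1) * ((a : ℤ) + b - 1) := by
  have hbz : (b : ℤ) ≠ 0 := by exact_mod_cast hb.ne'
  -- notation
  set R1 : ℤ := ∑ k ∈ range b, Rf a b k with hR1
  set S : ℤ := ∑ k ∈ range b, (k : ℤ) * Rf a b k with hS
  set K1 : ℤ := ∑ k ∈ range b, (k : ℤ) with hK1
  set K2 : ℤ := ∑ k ∈ range b, (k : ℤ) ^ 2 with hK2
  set RQ : ℤ := ∑ k ∈ range b, (Rf a b k) ^ 2 with hRQ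
  set U : ℤ := ∑ k ∈ range b, (k : ℤ) * ((a * k / b : ℕ) : ℤ) with hU
  set T : ℤ := ∑ k ∈ range b, ((a * k / b : ℕ) : ℤ) with hT
  set Q : ℤ := ∑ k ∈ range b, ((a * k / b : ℕ) : ℤ) ^ 2 with hQ
  -- pointwise div/mod decomposition
  have hrk : ∀ k, Rf a b k = (a : ℤ) * k - (b : ℤ) * ((a * k / b : ℕ) : ℤ) := by
    intro k
    have := Nat.div_add_mod (a * k) b
    have h2 := congrArg (fun n : ℕ => (n : ℤ)) this
    push_cast at h2
    simp only [Rf]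
    push_cast
    linarith
  -- E1
  have h1 : (b : ℤ) * inv' a b = (2 * b - 1) * R1 - 3 * S := by
    rw [hbI a b]
    have hpt : ∑ p ∈ Tri b, (if a * p.2 % b < a * p.1 % b then (b : ℤ) else 0) =
        ∑ p ∈ Tri b, (Rf a b (p.2 - p.1) + Rf a b p.1 - Rf a b p.2) := by
      refine Finset.sum_congr rfl fun p hp => ?_
      simp only [Tri, mem_filter, mem_product, mem_range] at hp
      exact pointwise a b h hb hp.1.1 hp.1.2 hp.2
    rw [hpt]
    rw [Finset.sum_sub_distrib, Finset.sum_add_distrib, sumA, sumB, sumC]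
    have e1 : ∑ d ∈ range b, ((b : ℤ) - d) * Rf a b d = b * R1 - S := by
      rw [hR1, hS, Finset.mul_sum, ← Finset.sum_sub_distrib]
      exact Finset.sum_congr rfl fun d _ => by ring
    have e2 : ∑ i ∈ range b, ((b : ℤ) - 1 - i) * Rf a b i = (b - 1) * R1 - S := by
      rw [hR1, hS, Finset.mul_sum, ← Finset.sum_sub_distrib]
      exact Finset.sum_congr rfl fun d _ => by ring
    rw [e1, e2]
    ring
  -- permutation identities
  have h2 : R1 = K1 := by
    rw [hR1, hK1]
    exact sum_perm a b h (fun k => (k : ℤ))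
  have h3 : RQ = K2 := by
    rw [hRQ, hK2]
    exact sum_perm a b h (fun k => (k : ℤ) ^ 2)
  -- div/mod expansions
  have h4 : S = (a : ℤ) * K2 - (b : ℤ) * U := by
    rw [hS, hK2, hU, Finset.mul_sum, Finset.mul_sum, ← Finset.sum_sub_distrib]
    refine Finset.sum_congr rfl fun k _ => ?_
    rw [hrk k]; ring
  have h5 : RQ = (a : ℤ) ^ 2 * K2 - 2 * a * b * U + (b : ℤ) ^ 2 * Q := by
    calc RQ = ∑ k ∈ range b, ((a : ℤ) ^ 2 * (k : ℤ) ^ 2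
          - 2 * (a : ℤ) * (b : ℤ) * ((k : ℤ) * ((a * k / b : ℕ) : ℤ))
          + (b : ℤ) ^ 2 * ((a * k / b : ℕ) : ℤ) ^ 2) := by
          rw [hRQ]
          exact Finset.sum_congr rfl fun k _ => by rw [hrk k]; ring
      _ = (a : ℤ) ^ 2 * K2 - 2 * a * b * U + (b : ℤ) ^ 2 * Q := by
          rw [Finset.sum_add_distrib, Finset.sum_sub_distrib, ← Finset.mul_sum,
            ← Finset.mul_sum, ← Finset.mul_sum, hK2, hU, hQ]
  have h6 : R1 = (a : ℤ) * K1 - (b : ℤ) * T := by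
    rw [hR1, hK1, hT, Finset.mul_sum, Finset.mul_sum, ← Finset.sum_sub_distrib]
    exact Finset.sum_congr rfl fun k _ => hrk k
  -- closed forms
  have h7 : 2 * K1 = (b : ℤ) * (b - 1) := by rw [hK1]; exact gauss1 b
  have h8 : 6 * K2 = (b : ℤ) * (b - 1) * (2 * b - 1) := by rw [hK2]; exact gauss2 b
  -- parity
  have h9 : ∃ W : ℤ, Q = T + 2 * W := by
    have hdvd : (2 : ℤ) ∣ Q - T := by
      rw [hQ, hT, ← Finset.sum_sub_distrib]
      refine Finset.dvd_sum fun k _ => ?_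
      have : ((a * k / b : ℕ) : ℤ) ^ 2 - ((a * k / b : ℕ) : ℤ) =
          ((a * k / b : ℕ) : ℤ) * (((a * k / b : ℕ) : ℤ) - 1) := by ring
      rw [this]
      exact (Int.even_mul_pred_self _).two_dvd -- may need renaming
    obtain ⟨W, hW⟩ := hdvd
    exact ⟨W, by linarith⟩
  obtain ⟨W, h9⟩ := h9
  -- the grand linear combination
  have main : (b : ℤ) * (4 * (a:ℤ) * (inv' a b : ℤ) - ((b:ℤ) - 1) * ((a:ℤ) - 1) * ((a:ℤ) + b - 1)) =
      4 * (b : ℤ) ^ 2 * (2 * T - (a : ℤ) * T + 3 * W) := by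
    linear_combination (4 * (a:ℤ)) * h1 + (4 * (a:ℤ) * (2 * (b:ℤ) - 1) - 2 * (b:ℤ) * (2 * (a:ℤ) - 1)) * h2
      + (-6 : ℤ) * h3 + (-12 * (a:ℤ)) * h4 + (6 : ℤ) * h5 + (2 * (b:ℤ) * (2 * (a:ℤ) - 1)) * h6
      + (2 * (a:ℤ) * (2 * (b:ℤ) - 1) + (b:ℤ) * (2 * (a:ℤ) - 1) * ((a:ℤ) - 1)) * h7
      + (-((a:ℤ) ^ 2 + 1)) * h8 + (6 * (b:ℤ) ^ 2) * h9
  refine ⟨2 * T - (a : ℤ) * T + 3 * W, ?_⟩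
  apply mul_left_cancel₀ hbz
  rw [main]
  ring

end KeyCongAux

theorem key_congruence (a₁ a₂ b m : ℕ) (ha₁ : 0 < a₁) (ha₂ : 0 < a₂) (hb : 0 < b)
    (h₁ : Nat.Coprime a₁ b) (h₂ : Nat.Coprime a₂ b) (hm : m ∈ ({b, 2 * b, 4 * b} : Set ℕ)) :
    4 * (a₁ : ℤ) * a₂ * ((inv' a₁ b : ℤ) - inv' a₂ b) ≡
      ((a₁ : ℤ) - a₂) * ((b : ℤ) - 1) * ((b : ℤ) + (a₁ : ℤ) * a₂ - 1) [ZMOD (m : ℤ)] := by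
  have key₁ := KeyCongAux.key a₁ b h₁ hb
  have key₂ := KeyCongAux.key a₂ b h₂ hb
  have hmd : (m : ℤ) ∣ 4 * (b : ℤ) := by
    rcases hm with rfl | rfl | rfl
    · exact ⟨4, by ring⟩
    · exact ⟨2, by push_cast; ring⟩
    · exact ⟨1, by push_cast; ring⟩
  refine Int.ModEq.of_dvd hmd ?_
  rw [Int.modEq_iff_dvd]
  obtain ⟨x₁, hx₁⟩ := key₁
  obtain ⟨x₂, hx₂⟩ := key₂
  exact ⟨(a₁ : ℤ) * x₂ - (a₂ : ℤ) * x₁, by linear_combination (a₁ : ℤ) * hx₂ - (a₂ : ℤ) * hx₁⟩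
end

section
/- Let p be an odd prime, e ∈ {1,2,3}, b = 2^e·p, and let a₁, a₂ be coprime to b with p ∣ (a₁ - a₂) and 4b ∣ (a₁-a₂)(b-1)(b + a₁a₂ - 1). Then b ∣ (a₁ - a₂). -/
lemma caseone_key1 : ∀ x y q : ZMod 8, x.val % 2 = 1 → y.val % 2 = 1 → q.val % 2 = 1 →
    (x - y) * (2 * q + x * y - 1) = 0 → (x - y).val % 2 = 0 := by decide

lemma caseone_key2 : ∀ x y q : ZMod 16, x.val % 2 = 1 → y.val % 2 = 1 → q.val % 2 = 1 →
    (x - y) * (4 * q + x * y - 1) = 0 → (x - y).val % 4 = 0 := by decide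

lemma caseone_key3 : ∀ x y q : ZMod 32, x.val % 2 = 1 → y.val % 2 = 1 → q.val % 2 = 1 →
    (x - y) * (8 * q + x * y - 1) = 0 → (x - y).val % 8 = 0 := by decide

theorem case_one (p e b a₁ a₂ : ℕ) (hp : p.Prime) (hpodd : Odd p)
    (he : e ∈ ({1, 2, 3} : Set ℕ)) (hb : b = 2 ^ e * p)
    (h₁ : Nat.Coprime a₁ b) (h₂ : Nat.Coprime a₂ b)
    (hpd : (p : ℤ) ∣ ((a₁ : ℤ) - a₂))
    (hdvd : (4 * b : ℤ) ∣ ((a₁ : ℤ) - a₂) * ((b : ℤ) - 1) * ((b : ℤ) + (a₁ : ℤ) * a₂ - 1)) :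
    (b : ℤ) ∣ ((a₁ : ℤ) - a₂) := by
  set d : ℤ := (a₁ : ℤ) - a₂ with hd
  -- basic oddness facts
  have hbe : 2 ∣ b := by
    rcases he with rfl | rfl | rfl <;> simp [hb] <;> ring_nf <;> omega
  have hodd1 : a₁ % 2 = 1 :=
    Nat.odd_iff.mp (Nat.coprime_two_right.mp (Nat.Coprime.coprime_dvd_right hbe h₁))
  have hodd2 : a₂ % 2 = 1 :=
    Nat.odd_iff.mp (Nat.coprime_two_right.mp (Nat.Coprime.coprime_dvd_right hbe h₂))
  have hoddp : p % 2 = 1 := Nat.odd_iff.mp hpodd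
  -- from hdvd, strip the odd factor (b - 1)
  have hbodd : ¬ (2:ℤ) ∣ ((b:ℤ) - 1) := by
    obtain ⟨k, hk⟩ := hbe
    rintro ⟨t, ht⟩
    have : (b : ℤ) = 2 * k := by exact_mod_cast congrArg Nat.cast hk
    omega
  have hcop : IsCoprime ((2:ℤ) ^ (e + 2)) ((b:ℤ) - 1) :=
    ((Int.prime_two.coprime_iff_not_dvd).mpr hbodd).pow_left
  have h2m : ((2:ℤ) ^ (e + 2)) ∣ d * ((b : ℤ) + (a₁ : ℤ) * a₂ - 1) := by
    apply hcop.dvd_of_dvd_mul_left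
    have h1 : ((2:ℤ) ^ (e + 2)) ∣ (4 * b : ℤ) := by
      have : (4 * b : ℤ) = 2 ^ (e + 2) * p := by
        rw [hb]; push_cast; ring
      exact this ▸ Dvd.intro _ rfl
    have := dvd_trans h1 hdvd
    have heq : d * ((b : ℤ) - 1) * ((b : ℤ) + (a₁ : ℤ) * a₂ - 1)
        = ((b:ℤ) - 1) * (d * ((b : ℤ) + (a₁ : ℤ) * a₂ - 1)) := by ring
    rwa [heq] at this
  -- 2^e ∣ d
  have h2e : ((2:ℤ) ^ e) ∣ d := by
    rcases he with rfl | rfl | rfl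
    · -- e = 1, modulus 8
      have h0 : ((d * ((b : ℤ) + (a₁ : ℤ) * a₂ - 1) : ℤ) : ZMod 8) = 0 := by
        rw [ZMod.intCast_zmod_eq_zero_iff_dvd]; exact_mod_cast h2m
      have h0' : ((a₁ : ZMod 8) - a₂) * (2 * (p : ZMod 8) + (a₁ : ZMod 8) * a₂ - 1) = 0 := by
        have : ((b : ℕ) : ZMod 8) = 2 * (p : ZMod 8) := by rw [hb]; push_cast; ring
        push_cast [hd] at h0; rw [this] at h0; exact h0
      have key := caseone_key1 (a₁ : ZMod 8) (a₂ : ZMod 8) (p : ZMod 8)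
        (by rw [ZMod.val_natCast]; omega) (by rw [ZMod.val_natCast]; omega)
        (by rw [ZMod.val_natCast]; omega) h0'
      have hcast : ((d : ZMod 8)) = (a₁ : ZMod 8) - a₂ := by push_cast [hd]; ring
      have hv : ((((a₁ : ZMod 8) - a₂).val : ℤ)) = d % 8 := by
        rw [← hcast, ZMod.val_intCast (n := 8) d]; norm_num
      have : (2:ℤ) ∣ d % 8 := by
        rw [← hv]; exact_mod_cast Nat.dvd_of_mod_eq_zero key
      omega
    · -- e = 2, modulus 16
      have h0 : ((d * ((b : ℤ) + (a₁ : ℤ) * a₂ - 1) : ℤ) : ZMod 16) = 0 := by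
        rw [ZMod.intCast_zmod_eq_zero_iff_dvd]; exact_mod_cast h2m
      have h0' : ((a₁ : ZMod 16) - a₂) * (4 * (p : ZMod 16) + (a₁ : ZMod 16) * a₂ - 1) = 0 := by
        have : ((b : ℕ) : ZMod 16) = 4 * (p : ZMod 16) := by rw [hb]; push_cast; ring
        push_cast [hd] at h0; rw [this] at h0; exact h0
      have key := caseone_key2 (a₁ : ZMod 16) (a₂ : ZMod 16) (p : ZMod 16)
        (by rw [ZMod.val_natCast]; omega) (by rw [ZMod.val_natCast]; omega)
        (by rw [ZMod.val_natCast]; omega) h0'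
      have hcast : ((d : ZMod 16)) = (a₁ : ZMod 16) - a₂ := by push_cast [hd]; ring
      have hv : ((((a₁ : ZMod 16) - a₂).val : ℤ)) = d % 16 := by
        rw [← hcast, ZMod.val_intCast (n := 16) d]; norm_num
      have : (4:ℤ) ∣ d % 16 := by
        rw [← hv]; exact_mod_cast Nat.dvd_of_mod_eq_zero key
      omega
    · -- e = 3, modulus 32
      have h0 : ((d * ((b : ℤ) + (a₁ : ℤ) * a₂ - 1) : ℤ) : ZMod 32) = 0 := by
        rw [ZMod.intCast_zmod_eq_zero_iff_dvd]; exact_mod_cast h2m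
      have h0' : ((a₁ : ZMod 32) - a₂) * (8 * (p : ZMod 32) + (a₁ : ZMod 32) * a₂ - 1) = 0 := by
        have : ((b : ℕ) : ZMod 32) = 8 * (p : ZMod 32) := by rw [hb]; push_cast; ring
        push_cast [hd] at h0; rw [this] at h0; exact h0
      have key := caseone_key3 (a₁ : ZMod 32) (a₂ : ZMod 32) (p : ZMod 32)
        (by rw [ZMod.val_natCast]; omega) (by rw [ZMod.val_natCast]; omega)
        (by rw [ZMod.val_natCast]; omega) h0'
      have hcast : ((d : ZMod 32)) = (a₁ : ZMod 32) - a₂ := by push_cast [hd]; ring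
      have hv : ((((a₁ : ZMod 32) - a₂).val : ℤ)) = d % 32 := by
        rw [← hcast, ZMod.val_intCast (n := 32) d]; norm_num
      have : (8:ℤ) ∣ d % 32 := by
        rw [← hv]; exact_mod_cast Nat.dvd_of_mod_eq_zero key
      omega
  -- combine
  have hcop2 : IsCoprime ((2:ℤ) ^ e) ((p:ℤ)) := by
    apply IsCoprime.pow_left
    rw [Int.prime_two.coprime_iff_not_dvd]
    intro ⟨t, ht⟩
    have hp2 : (p : ℤ) % 2 = 1 := by omega
    omega
  have := hcop2.mul_dvd h2e hpd
  rw [hb]; push_cast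
  exact this
end

section
/- Let p be an odd prime, e ∈ {1,2,3}, b = 2^e·p, and let a₁, a₂ be coprime to b with p ∣ (a₁a₂ - 1) and 4b ∣ (a₁-a₂)(b-1)(b + a₁a₂ - 1). Then b ∣ (a₁a₂ - 1). -/
private lemma key_two (v : ℕ) (A B : ℤ) (hA : (2:ℤ)^v ∣ A) (hA' : ¬(2:ℤ)^(v+1) ∣ A)
    (hB : (2:ℤ)^v ∣ B) (hB' : ¬(2:ℤ)^(v+1) ∣ B) (h : (2:ℤ)^(2*v+1) ∣ A * B) : False := by
  obtain ⟨a, ha⟩ := hA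
  obtain ⟨b, hbb⟩ := hB
  have hao : ¬ (2:ℤ) ∣ a := fun ⟨c, hc⟩ => hA' ⟨c, by rw [ha, hc]; ring⟩
  have hbo : ¬ (2:ℤ) ∣ b := fun ⟨c, hc⟩ => hB' ⟨c, by rw [hbb, hc]; ring⟩
  have h2 : (2:ℤ) ∣ a * b := by
    rw [ha, hbb] at h
    have h3 : (2:ℤ)^(2*v) * 2 ∣ (2:ℤ)^(2*v) * (a*b) := by
      calc (2:ℤ)^(2*v) * 2 = 2^(2*v+1) := by ring
      _ ∣ 2^v * a * (2^v * b) := h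
      _ = (2:ℤ)^(2*v) * (a*b) := by ring
    exact (mul_dvd_mul_iff_left (a := (2:ℤ)^(2*v)) (by positivity)).mp h3
  rcases (Int.prime_two.dvd_mul.mp h2) with h | h
  · exact hao h
  · exact hbo h

theorem case_two (p e b a₁ a₂ : ℕ) (hp : p.Prime) (hpodd : Odd p)
    (he : e ∈ ({1, 2, 3} : Set ℕ)) (hb : b = 2 ^ e * p)
    (h₁ : Nat.Coprime a₁ b) (h₂ : Nat.Coprime a₂ b)
    (hpd : (p : ℤ) ∣ ((a₁ : ℤ) * a₂ - 1))
    (hdvd : (4 * b : ℤ) ∣ ((a₁ : ℤ) - a₂) * ((b : ℤ) - 1) * ((b : ℤ) + (a₁ : ℤ) * a₂ - 1)) :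
    (b : ℤ) ∣ ((a₁ : ℤ) * a₂ - 1) := by
  have he' : e = 1 ∨ e = 2 ∨ e = 3 := by simpa using he
  have he1 : 1 ≤ e := by rcases he' with h|h|h <;> omega
  have hbZ : (b:ℤ) = 2^e * (p:ℤ) := by rw [hb]; push_cast; ring
  set N : ℤ := (a₁ : ℤ) * a₂ - 1 with hN
  -- a₁, a₂ odd
  have h2b : 2 ∣ b := by rw [hb]; exact Dvd.dvd.mul_right (dvd_pow_self 2 (by omega)) p
  have hodd : ∀ a : ℕ, Nat.Coprime a b → ¬ (2:ℤ) ∣ (a : ℤ) := by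
    intro a hc h
    have h2a : (2:ℕ) ∣ a := Int.ofNat_dvd.mp (by exact_mod_cast h)
    have := Nat.dvd_gcd h2a h2b
    rw [hc] at this
    omega
  have hodd1 := hodd a₁ h₁
  have hodd2 := hodd a₂ h₂
  have hpodd' : ¬ (2:ℤ) ∣ (p:ℤ) := by
    intro h
    have : (2:ℕ) ∣ p := Int.ofNat_dvd.mp (by exact_mod_cast h)
    rcases hpodd with ⟨k, hk⟩; omega
  -- reduce to 2^e ∣ N
  suffices h2e : (2:ℤ)^e ∣ N by
    rw [hbZ]
    exact IsCoprime.mul_dvd ((Int.prime_two.coprime_iff_not_dvd.mpr hpodd').pow_left) h2e hpd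
  by_contra h2e
  -- N is even
  have hNeven : (2:ℤ) ∣ N := by
    rcases Int.not_even_iff_odd.mp (fun h => hodd1 h.two_dvd) with ⟨j, hj⟩
    rcases Int.not_even_iff_odd.mp (fun h => hodd2 h.two_dvd) with ⟨k, hk⟩
    exact ⟨2*j*k + j + k, by rw [hN, hj, hk]; ring⟩
  -- extract exact 2-adic valuation v of N, with v+1 ≤ e and v+1 ≤ 3
  obtain ⟨v, hvlt, hve, hv3, hv1, hv2⟩ :
      ∃ v, 2*v+1 ≤ e+2 ∧ v+1 ≤ e ∧ v+1 ≤ 3 ∧ (2:ℤ)^v ∣ N ∧ ¬(2:ℤ)^(v+1) ∣ N := by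
    rcases he' with rfl|rfl|rfl
    · exact absurd (by simpa using hNeven) h2e
    · exact ⟨1, by norm_num, by norm_num, by norm_num, by simpa using hNeven, by simpa using h2e⟩
    · by_cases h4 : (2:ℤ)^2 ∣ N
      · exact ⟨2, by norm_num, by norm_num, by norm_num, h4, by simpa using h2e⟩
      · exact ⟨1, by norm_num, by norm_num, by norm_num, by simpa using hNeven, h4⟩
  -- 8 ∣ a₂² - 1
  have h8 : (2:ℤ)^3 ∣ (a₂:ℤ)^2 - 1 := by
    rcases Int.not_even_iff_odd.mp (fun h => hodd2 h.two_dvd) with ⟨k, hk⟩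
    rcases Int.even_mul_succ_self k with ⟨m, hm⟩
    exact ⟨m, by rw [hk]; nlinarith [hm]⟩
  -- key identity
  have hid : (a₂:ℤ) * ((a₁:ℤ) - a₂) = N - ((a₂:ℤ)^2 - 1) := by rw [hN]; ring
  have hcop : ∀ k : ℕ, IsCoprime ((2:ℤ)^k) (a₂:ℤ) :=
    fun k => (Int.prime_two.coprime_iff_not_dvd.mpr hodd2).pow_left
  -- facts about A = a₁ - a₂
  have hA : (2:ℤ)^v ∣ (a₁:ℤ) - a₂ := by
    refine (hcop v).dvd_of_dvd_mul_left ?_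
    rw [hid]
    exact dvd_sub hv1 ((pow_dvd_pow 2 (by omega)).trans h8)
  have hA' : ¬(2:ℤ)^(v+1) ∣ (a₁:ℤ) - a₂ := by
    intro h
    apply hv2
    have : (2:ℤ)^(v+1) ∣ (a₂:ℤ) * ((a₁:ℤ) - a₂) := Dvd.dvd.mul_left h _
    rw [hid] at this
    have h81 : (2:ℤ)^(v+1) ∣ (a₂:ℤ)^2 - 1 := (pow_dvd_pow 2 hv3).trans h8
    have := dvd_add this h81
    simpa using this
  -- facts about B = b + N
  have h2v1b : (2:ℤ)^(v+1) ∣ (b:ℤ) := by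
    rw [hbZ]; exact Dvd.dvd.mul_right (pow_dvd_pow 2 hve) _
  have hB : (2:ℤ)^v ∣ (b:ℤ) + N :=
    dvd_add ((pow_dvd_pow 2 (by omega)).trans h2v1b) hv1
  have hB' : ¬(2:ℤ)^(v+1) ∣ (b:ℤ) + N := by
    intro h
    apply hv2
    have := dvd_sub h h2v1b
    simpa using this
  -- get 2^(e+2) ∣ (a₁-a₂)*(b+N)
  have hstep : (2:ℤ)^(e+2) ∣ ((a₁:ℤ) - a₂) * ((b:ℤ) + N) := by
    have h4b : (4*(b:ℤ)) = 2^(e+2) * (p:ℤ) := by rw [hbZ]; ring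
    have hd1 : (2:ℤ)^(e+2) ∣ ((a₁:ℤ) - a₂) * ((b:ℤ) + N) * ((b:ℤ) - 1) := by
      have : (2:ℤ)^(e+2) ∣ ((a₁:ℤ) - a₂) * ((b:ℤ) - 1) * ((b:ℤ) + (a₁:ℤ)*a₂ - 1) :=
        (Dvd.dvd.mul_right ⟨1, by ring⟩ _).trans (h4b ▸ hdvd)
      have heq : ((a₁:ℤ) - a₂) * ((b:ℤ) - 1) * ((b:ℤ) + (a₁:ℤ)*a₂ - 1)
          = ((a₁:ℤ) - a₂) * ((b:ℤ) + N) * ((b:ℤ) - 1) := by rw [hN]; ring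
      rwa [heq] at this
    have hbodd : ¬ (2:ℤ) ∣ ((b:ℤ) - 1) := by
      intro h
      have h2bz : (2:ℤ) ∣ (b:ℤ) := by exact_mod_cast Int.ofNat_dvd.mpr h2b
      have h1 : (2:ℤ) ∣ 1 := by simpa using dvd_sub h2bz h
      norm_num at h1
    exact ((Int.prime_two.coprime_iff_not_dvd.mpr hbodd).pow_left).dvd_of_dvd_mul_right hd1
  exact key_two v _ _ hA hA' hB hB' ((pow_dvd_pow 2 hvlt).trans hstep)
end
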